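/- arXiv:1803.06876 — 2 statements merged into one kernel-verified Lean document; each statement's English description precedes it below -/
import Mathlib

section
/- Let P be a poset, 𝓜, 𝓝 minimal subset selections on P, and x, y ∈ P. Then x ≪_𝓜𝓝 y if and only if for every net (x_i)_{i∈I} in P, if (x_i) 𝓜𝓝-converges to y then x_i ∈ ↑x eventually. -/
universe u

/-- A directed preordered index for a net. -/
structure IsDirNet {I : Type u} (r : I → I → Prop) : Prop where
  refl : ∀ i, r i i
  trans : ∀ {i j k : I}, r i j → r j k → r i k
  nonempty : Nonempty I
  directed : ∀ i j, ∃ k, r i k ∧ r j k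

/-- A minimal subset selection on a poset `P`. -/
def MinSel {P : Type u} [PartialOrder P] (M : Set (Set P)) : Prop :=
  (∅ : Set P) ∉ M ∧ ∀ x : P, {x} ∈ M

/-- The net `f : I → P` `𝓜𝓝`-converges to `x`. -/
def MNConv {P : Type u} [PartialOrder P] (M N : Set (Set P))
    {I : Type u} (r : I → I → Prop) (f : I → P) (x : P) : Prop :=
  ∃ A S : Set P, A ∈ M ∧ S ∈ N ∧ IsLUB A x ∧ IsGLB S x ∧
    ∀ a ∈ A, ∀ s ∈ S, ∃ i₀, ∀ i, r i₀ i → a ≤ f i ∧ f i ≤ s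

/-- The topology `τ_𝓜𝓝` induced by `𝓜𝓝`-convergence. -/
def mnTop {P : Type u} [PartialOrder P] (M N : Set (Set P)) : Set (Set P) :=
  {U | ∀ (I : Type u) (r : I → I → Prop) (f : I → P) (x : P),
      IsDirNet r → MNConv M N r f x → x ∈ U → ∃ i₀, ∀ i, r i₀ i → f i ∈ U}

/-- The `𝓜𝓝`-convergence structure is topological. -/
def MNTopological {P : Type u} [PartialOrder P] (M N : Set (Set P)) : Prop :=
  ∀ (I : Type u) (r : I → I → Prop) (f : I → P) (x : P), IsDirNet r →
    (∀ U ∈ mnTop M N, x ∈ U → ∃ i₀, ∀ i, r i₀ i → f i ∈ U) →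
    MNConv M N r f x

/-- The relation `x ≪_𝓜𝓝 y`. -/
def wbMN {P : Type u} [PartialOrder P] (M N : Set (Set P)) (x y : P) : Prop :=
  ∀ A S : Set P, A ∈ M → S ∈ N → IsLUB A y → IsGLB S y →
    ∃ B T : Set P, B.Nonempty ∧ B.Finite ∧ B ⊆ A ∧ T.Nonempty ∧ T.Finite ∧ T ⊆ S ∧
      upperBounds B ∩ lowerBounds T ⊆ Set.Ici x

/-- The relation `y ◁_𝓜𝓝 z`. -/
def triMN {P : Type u} [PartialOrder P] (M N : Set (Set P)) (y z : P) : Prop :=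
  ∀ A S : Set P, A ∈ M → S ∈ N → IsLUB A y → IsGLB S y →
    ∃ B T : Set P, B.Nonempty ∧ B.Finite ∧ B ⊆ A ∧ T.Nonempty ∧ T.Finite ∧ T ⊆ S ∧
      upperBounds B ∩ lowerBounds T ⊆ Set.Iic z

/-- `𝓜𝓝`-continuity of the poset `P`. -/
def MNCont {P : Type u} [PartialOrder P] (M N : Set (Set P)) : Prop :=
  ∀ x y : P,
    (∃ A S : Set P, A ∈ M ∧ S ∈ N ∧ A ⊆ {w | wbMN M N w x} ∧
      S ⊆ {w | triMN M N x w} ∧ IsLUB A x ∧ IsGLB S x) ∧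
    ({w | wbMN M N x w} ∩ {w | triMN M N w y}) ∈ mnTop M N

/-!
For `⇒`, a net converging to `y` through `A` and `S` eventually lies in `ub B ∩ lb T` for any
finite `B ⊆ A` and `T ⊆ S`, hence above `x`. For `⇐`, if `x ≪_𝓜𝓝 y` fails for `A` and `S`,
pick for every pair `(B, T)` of nonempty finite subsets of `A` and `S` a point of
`ub B ∩ lb T` not above `x`. Indexed by these pairs ordered by inclusion (there are some, as
`∅ ∉ 𝓜, 𝓝`), this is a net that `𝓜𝓝`-converges to `y` but is never above `x`.
-/

namespace IsDirNet

variable {I : Type u} {r : I → I → Prop}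

theorem of_le [Preorder I] [Nonempty I] (h : ∀ i j : I, ∃ k, i ≤ k ∧ j ≤ k) :
    IsDirNet (fun i j : I => i ≤ j) :=
  ⟨le_refl, le_trans, ‹_›, h⟩

theorem eventually_and (h : IsDirNet r) {p q : I → Prop}
    (hp : ∃ i₀, ∀ i, r i₀ i → p i) (hq : ∃ i₀, ∀ i, r i₀ i → q i) :
    ∃ i₀, ∀ i, r i₀ i → p i ∧ q i := by
  obtain ⟨j, hj⟩ := hp
  obtain ⟨k, hk⟩ := hq
  obtain ⟨m, hjm, hkm⟩ := h.directed j k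
  exact ⟨m, fun i hi => ⟨hj i (h.trans hjm hi), hk i (h.trans hkm hi)⟩⟩

theorem eventually_forall_of_finite {Q : Type*} (h : IsDirNet r) {B : Set Q} (hB : B.Finite)
    {p : Q → I → Prop} (hp : ∀ b ∈ B, ∃ i₀, ∀ i, r i₀ i → p b i) :
    ∃ i₀, ∀ i, r i₀ i → ∀ b ∈ B, p b i := by
  induction B, hB using Set.Finite.induction_on with
  | empty =>
    obtain ⟨k⟩ := h.nonempty
    exact ⟨k, fun _ _ _ hb => hb.elim⟩
  | @insert a B _ _ ih =>
    obtain ⟨i₀, hi₀⟩ := h.eventually_and (hp a (Set.mem_insert a B))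
      (ih fun b hb => hp b (Set.mem_insert_of_mem a hb))
    exact ⟨i₀, fun i hi => Set.forall_mem_insert.2 (hi₀ i hi)⟩

end IsDirNet

section

variable {α : Type u}

def finSubsets (A : Set α) : Set (Set α) :=
  {B | B.Nonempty ∧ B.Finite ∧ B ⊆ A}

theorem singleton_mem_finSubsets {A : Set α} {a : α} (ha : a ∈ A) : {a} ∈ finSubsets A :=
  ⟨Set.singleton_nonempty a, Set.finite_singleton a, Set.singleton_subset_iff.2 ha⟩

theorem union_mem_finSubsets {A B C : Set α} (hB : B ∈ finSubsets A) (hC : C ∈ finSubsets A) :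
    B ∪ C ∈ finSubsets A :=
  ⟨hB.1.mono Set.subset_union_left, hB.2.1.union hC.2.1, Set.union_subset hB.2.2 hC.2.2⟩

theorem isDirNet_finSubsets_prod {A S : Set α} (hA : A.Nonempty) (hS : S.Nonempty) :
    IsDirNet (fun p q : ↥(finSubsets A ×ˢ finSubsets S) => p ≤ q) := by
  obtain ⟨a, ha⟩ := hA
  obtain ⟨s, hs⟩ := hS
  have : Nonempty ↥(finSubsets A ×ˢ finSubsets S) :=
    ⟨⟨({a}, {s}), singleton_mem_finSubsets ha, singleton_mem_finSubsets hs⟩⟩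
  refine IsDirNet.of_le fun p q => ⟨⟨p.1 ⊔ q.1, ?_, ?_⟩, (le_sup_left : p.1 ≤ p.1 ⊔ q.1),
    (le_sup_right : q.1 ≤ p.1 ⊔ q.1)⟩
  · exact union_mem_finSubsets p.2.1 q.2.1
  · exact union_mem_finSubsets p.2.2 q.2.2

end

section

variable {P : Type u} [PartialOrder P]

theorem MinSel.nonempty_of_mem {M : Set (Set P)} (hM : MinSel M) {A : Set P} (hA : A ∈ M) :
    A.Nonempty :=
  Set.nonempty_iff_ne_empty.2 fun h => hM.1 (h ▸ hA)

theorem eventually_mem_upperBounds_inter_lowerBounds {I : Type u} {r : I → I → Prop}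
    (hr : IsDirNet r) {f : I → P} {A S B T : Set P}
    (hf : ∀ a ∈ A, ∀ s ∈ S, ∃ i₀, ∀ i, r i₀ i → a ≤ f i ∧ f i ≤ s)
    (hB : B.Nonempty) (hBfin : B.Finite) (hBA : B ⊆ A)
    (hT : T.Nonempty) (hTfin : T.Finite) (hTS : T ⊆ S) :
    ∃ i₀, ∀ i, r i₀ i → f i ∈ upperBounds B ∩ lowerBounds T := by
  obtain ⟨b, hb⟩ := hB
  obtain ⟨t, ht⟩ := hT
  refine hr.eventually_and (hr.eventually_forall_of_finite hBfin fun a ha => ?_)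
    (hr.eventually_forall_of_finite hTfin fun s hs => ?_)
  · exact (hf a (hBA ha) t (hTS ht)).imp fun _ h i hi => (h i hi).1
  · exact (hf b (hBA hb) s (hTS hs)).imp fun _ h i hi => (h i hi).2

theorem wbMN.eventually_le {M N : Set (Set P)} {x y : P} (hxy : wbMN M N x y)
    {I : Type u} {r : I → I → Prop} (hr : IsDirNet r) {f : I → P} (hf : MNConv M N r f y) :
    ∃ i₀, ∀ i, r i₀ i → x ≤ f i := by
  obtain ⟨A, S, hA, hS, hAy, hSy, hfAS⟩ := hf
  obtain ⟨B, T, hB, hBfin, hBA, hT, hTfin, hTS, hBT⟩ := hxy A S hA hS hAy hSy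
  exact (eventually_mem_upperBounds_inter_lowerBounds hr hfAS hB hBfin hBA hT hTfin hTS).imp
    fun _ h i hi => hBT (h i hi)

theorem mnConv_of_mem_upperBounds_inter_lowerBounds {M N : Set (Set P)} {A S : Set P} {y : P}
    (hA : A ∈ M) (hS : S ∈ N) (hAy : IsLUB A y) (hSy : IsGLB S y)
    (g : ↥(finSubsets A ×ˢ finSubsets S) → P)
    (hg : ∀ p, g p ∈ upperBounds p.1.1 ∩ lowerBounds p.1.2) :
    MNConv M N (fun p q => p ≤ q) g y := by
  refine ⟨A, S, hA, hS, hAy, hSy, fun a ha s hs => ?_⟩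
  exact ⟨⟨({a}, {s}), singleton_mem_finSubsets ha, singleton_mem_finSubsets hs⟩,
    fun p hp => ⟨(hg p).1 (hp.1 rfl), (hg p).2 (hp.2 rfl)⟩⟩

end

/-- Net characterisation of `x ≪_𝓜𝓝 y`. -/
theorem stmt_11 {P : Type u} [PartialOrder P] (M N : Set (Set P))
    (hM : MinSel M) (hN : MinSel N) (x y : P) :
    wbMN M N x y ↔
      ∀ (I : Type u) (r : I → I → Prop) (f : I → P), IsDirNet r →
        MNConv M N r f y → ∃ i₀, ∀ i, r i₀ i → x ≤ f i := by
  refine ⟨fun hxy I r f hr hf => hxy.eventually_le hr hf, fun hnet => ?_⟩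
  by_contra hxy
  obtain ⟨A, S, hA, hS, hAy, hSy, hAS⟩ : ∃ A S : Set P, A ∈ M ∧ S ∈ N ∧ IsLUB A y ∧
      IsGLB S y ∧ ∀ p : ↥(finSubsets A ×ˢ finSubsets S),
        ∃ z ∈ upperBounds p.1.1 ∩ lowerBounds p.1.2, ¬ x ≤ z := by
    contrapose! hxy
    intro A S hA hS hAy hSy
    obtain ⟨⟨⟨B, T⟩, ⟨hB, hBfin, hBA⟩, hT, hTfin, hTS⟩, hBT⟩ := hxy A S hA hS hAy hSy
    exact ⟨B, T, hB, hBfin, hBA, hT, hTfin, hTS, hBT⟩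
  choose g hg hgx using hAS
  obtain ⟨i₀, hi₀⟩ := hnet _ _ g
    (isDirNet_finSubsets_prod (hM.nonempty_of_mem hA) (hN.nonempty_of_mem hS))
    (mnConv_of_mem_upperBounds_inter_lowerBounds hA hS hAy hSy g hg)
  exact hgx i₀ (hi₀ i₀ le_rfl)
end

section
/- Let P be a poset and 𝓜, 𝓝 minimal subset selections on P. Then P is 𝓜𝓝-continuous if and only if the 𝓜𝓝-convergence structure in P is topological (i.e., every net converging to a point x in the topology τ_𝓜𝓝 also 𝓜𝓝-converges to x). -/
universe u

/-!
Around each of its points `z = sup A = inf S`, an `𝓜𝓝`-open set `U` contains a whole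
"interval" `ub B ∩ lb T` with `B ⊆ A`, `T ⊆ S` finite and nonempty: otherwise, choosing a point
of each such interval outside `U` gives a net indexed by the pairs `(B, T)` that `𝓜𝓝`-converges
to `z` without ever entering `U`. Hence `x ≪ w` (resp. `w ◁ y`) holds as soon as some open set
around `w` lies in `↑x` (resp. `↓y`).

If the convergence is topological, the net of open neighbourhoods of `x` `𝓜𝓝`-converges to `x`,
which yields `A` and `S` all of whose finite intervals are neighbourhoods of `x`. Then `x ≪ w`
(resp. `w ◁ y`) says exactly that `↑x` (resp. `↓y`) is a neighbourhood of `w`, and (MN1), (MN2)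
follow. Conversely, for `A`, `S` as in (MN1), (MN2) makes each `{w | a ≪ w ◁ s}` an open
neighbourhood of `x`, so a net converging topologically to `x` is eventually between `a` and `s`.
-/

variable {P : Type u} [PartialOrder P] {M N : Set (Set P)}

lemma MinSel.nonempty (hM : MinSel M) {A : Set P} (hA : A ∈ M) : A.Nonempty :=
  Set.nonempty_iff_ne_empty.mpr fun h => hM.1 (h ▸ hA)

lemma univ_mem_mnTop : (Set.univ : Set P) ∈ mnTop M N := by
  intro I r f x hd _ _
  obtain ⟨i₀⟩ := hd.nonempty
  exact ⟨i₀, fun _ _ => trivial⟩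

lemma inter_mem_mnTop {U V : Set P} (hU : U ∈ mnTop M N) (hV : V ∈ mnTop M N) :
    U ∩ V ∈ mnTop M N := by
  intro I r f x hd hc hx
  obtain ⟨i₁, h₁⟩ := hU I r f x hd hc hx.1
  obtain ⟨i₂, h₂⟩ := hV I r f x hd hc hx.2
  obtain ⟨k, hk₁, hk₂⟩ := hd.directed i₁ i₂
  exact ⟨k, fun i hi => ⟨h₁ i (hd.trans hk₁ hi), h₂ i (hd.trans hk₂ hi)⟩⟩

lemma Set.Finite.biInter_mem_mnTop {ι : Type*} {s : Set ι} (hs : s.Finite) {U : ι → Set P}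
    (hU : ∀ i ∈ s, U i ∈ mnTop M N) : ⋂ i ∈ s, U i ∈ mnTop M N := by
  induction s, hs using Set.Finite.induction_on with
  | empty => simpa using univ_mem_mnTop
  | insert _ _ ih =>
    rw [Set.biInter_insert]
    exact inter_mem_mnTop (hU _ (Set.mem_insert _ _))
      (ih fun i hi => hU i (Set.mem_insert_of_mem _ hi))

lemma mem_mnTop_of_forall_exists_subset {W : Set P}
    (h : ∀ z ∈ W, ∃ U ∈ mnTop M N, z ∈ U ∧ U ⊆ W) : W ∈ mnTop M N := by
  intro I r f z hd hc hz
  obtain ⟨U, hU, hzU, hUW⟩ := h z hz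
  obtain ⟨i₀, hi₀⟩ := hU I r f z hd hc hzU
  exact ⟨i₀, fun i hi => hUW (hi₀ i hi)⟩

section finPairs

variable {α : Type u} {A S : Set α}

/-- The index set of the net witnessing that a point outside an open set cannot be avoided. -/
def finPairs (A S : Set α) : Set (Set α × Set α) :=
  {p | p.1.Nonempty ∧ p.1.Finite ∧ p.1 ⊆ A ∧ p.2.Nonempty ∧ p.2.Finite ∧ p.2 ⊆ S}

lemma singleton_mem_finPairs {a s : α} (ha : a ∈ A) (hs : s ∈ S) : ({a}, {s}) ∈ finPairs A S :=
  ⟨Set.singleton_nonempty a, Set.finite_singleton a, Set.singleton_subset_iff.mpr ha,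
    Set.singleton_nonempty s, Set.finite_singleton s, Set.singleton_subset_iff.mpr hs⟩

lemma isDirNet_finPairs (hA : A.Nonempty) (hS : S.Nonempty) :
    IsDirNet ((· ≤ ·) : finPairs A S → finPairs A S → Prop) := by
  obtain ⟨a, ha⟩ := hA
  obtain ⟨s, hs⟩ := hS
  refine ⟨le_refl, le_trans, ⟨⟨_, singleton_mem_finPairs ha hs⟩⟩, fun i j => ?_⟩
  obtain ⟨hB, hBf, hBA, hT, hTf, hTS⟩ := i.2
  obtain ⟨hB', hBf', hBA', -, hTf', hTS'⟩ := j.2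
  refine ⟨⟨i.1 ⊔ j.1, hB.mono Set.subset_union_left, hBf.union hBf', Set.union_subset hBA hBA',
    hT.mono Set.subset_union_left, hTf.union hTf', Set.union_subset hTS hTS'⟩,
    show i.1 ≤ i.1 ⊔ j.1 from le_sup_left, show j.1 ≤ i.1 ⊔ j.1 from le_sup_right⟩

end finPairs

lemma mnConv_finPairs {A S : Set P} {z : P} (hA : A ∈ M) (hS : S ∈ N) (hlub : IsLUB A z)
    (hglb : IsGLB S z)
    (f : finPairs A S → P) (hf : ∀ i, f i ∈ upperBounds i.1.1 ∩ lowerBounds i.1.2) :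
    MNConv M N (· ≤ ·) f z := by
  refine ⟨A, S, hA, hS, hlub, hglb, fun a ha s hs => ⟨⟨_, singleton_mem_finPairs ha hs⟩, ?_⟩⟩
  rintro i ⟨hai, hsi⟩
  exact ⟨(hf i).1 (hai rfl), (hf i).2 (hsi rfl)⟩

/-- `wbMN M N x y` is `IsMNNhd M N (Set.Ici x) y` and `triMN M N y z` is
`IsMNNhd M N (Set.Iic z) y`. -/
def IsMNNhd (M N : Set (Set P)) (V : Set P) (w : P) : Prop :=
  ∀ A S : Set P, A ∈ M → S ∈ N → IsLUB A w → IsGLB S w →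
    ∃ B T : Set P, B.Nonempty ∧ B.Finite ∧ B ⊆ A ∧ T.Nonempty ∧ T.Finite ∧ T ⊆ S ∧
      upperBounds B ∩ lowerBounds T ⊆ V

namespace IsMNNhd

variable {V W : Set P} {w : P}

lemma mono (h : IsMNNhd M N V w) (hVW : V ⊆ W) : IsMNNhd M N W w := by
  intro A S hA hS hlub hglb
  obtain ⟨B, T, hB, hBf, hBA, hT, hTf, hTS, hBT⟩ := h A S hA hS hlub hglb
  exact ⟨B, T, hB, hBf, hBA, hT, hTf, hTS, hBT.trans hVW⟩

lemma mem (hM : MinSel M) (hN : MinSel N) (h : IsMNNhd M N V w) : w ∈ V := by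
  obtain ⟨B, T, -, -, hBw, -, -, hTw, hBT⟩ :=
    h {w} {w} (hM.2 w) (hN.2 w) isLUB_singleton isGLB_singleton
  exact hBT ⟨fun b hb => (hBw hb).le, fun t ht => (hTw ht).ge⟩

end IsMNNhd

lemma wbMN.le (hM : MinSel M) (hN : MinSel N) {x y : P} (h : wbMN M N x y) : x ≤ y :=
  IsMNNhd.mem (V := Set.Ici x) hM hN h

lemma triMN.le (hM : MinSel M) (hN : MinSel N) {y z : P} (h : triMN M N y z) : y ≤ z :=
  IsMNNhd.mem (V := Set.Iic z) hM hN h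

lemma isMNNhd_of_mem_mnTop (hM : MinSel M) (hN : MinSel N) {U V : Set P} {z : P}
    (hU : U ∈ mnTop M N) (hz : z ∈ U) (hUV : U ⊆ V) : IsMNNhd M N V z := by
  refine IsMNNhd.mono (fun A S hA hS hlub hglb => ?_) hUV
  by_contra! hnot
  have hout : ∀ i : finPairs A S, ∃ p ∈ upperBounds i.1.1 ∩ lowerBounds i.1.2, p ∉ U := by
    rintro ⟨⟨B, T⟩, hB, hBf, hBA, hT, hTf, hTS⟩
    exact Set.not_subset.mp (hnot B T hB hBf hBA hT hTf hTS)
  choose f hf hfU using hout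
  obtain ⟨i₀, hi₀⟩ := hU _ _ f z (isDirNet_finPairs (hM.nonempty hA) (hN.nonempty hS))
    (mnConv_finPairs hA hS hlub hglb f hf) hz
  exact hfU i₀ (hi₀ i₀ le_rfl)

/-- Apply topological convergence to the net of pointed open neighbourhoods of `x`. -/
lemma exists_mnTop_subset_Icc (hT : MNTopological M N) (x : P) :
    ∃ A S : Set P, A ∈ M ∧ S ∈ N ∧ IsLUB A x ∧ IsGLB S x ∧
      ∀ a ∈ A, ∀ s ∈ S, ∃ U ∈ mnTop M N, x ∈ U ∧ U ⊆ Set.Icc a s := by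
  let I := {q : Set P × P // q.1 ∈ mnTop M N ∧ x ∈ q.1 ∧ q.2 ∈ q.1}
  let r : I → I → Prop := fun i j => j.1.1 ⊆ i.1.1
  have hdir : IsDirNet r :=
    ⟨fun _ => subset_rfl, fun hij hjk => hjk.trans hij,
      ⟨⟨(Set.univ, x), univ_mem_mnTop, trivial, trivial⟩⟩, fun i j =>
      ⟨⟨(i.1.1 ∩ j.1.1, x), inter_mem_mnTop i.2.1 j.2.1, ⟨i.2.2.1, j.2.2.1⟩,
        ⟨i.2.2.1, j.2.2.1⟩⟩, Set.inter_subset_left, Set.inter_subset_right⟩⟩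
  obtain ⟨A, S, hA, hS, hlub, hglb, hev⟩ := hT I r (fun i => i.1.2) x hdir
    fun U hU hxU => ⟨⟨(U, x), hU, hxU, hxU⟩, fun i hi => hi i.2.2.2⟩
  refine ⟨A, S, hA, hS, hlub, hglb, fun a ha s hs => ?_⟩
  obtain ⟨i₀, hi₀⟩ := hev a ha s hs
  exact ⟨i₀.1.1, i₀.2.1, i₀.2.2.1, fun p hp => hi₀ ⟨(i₀.1.1, p), i₀.2.1, i₀.2.2.1, hp⟩ subset_rfl⟩

lemma IsMNNhd.exists_mem_mnTop (hT : MNTopological M N) {V : Set P} {w : P}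
    (h : IsMNNhd M N V w) : ∃ U ∈ mnTop M N, w ∈ U ∧ U ⊆ V := by
  obtain ⟨A, S, hA, hS, hlub, hglb, hnhds⟩ := exists_mnTop_subset_Icc hT w
  obtain ⟨B, T, ⟨b₀, hb₀⟩, hBf, hBA, ⟨t₀, ht₀⟩, hTf, hTS, hBT⟩ := h A S hA hS hlub hglb
  choose! U hU hwU hUsub using hnhds
  refine ⟨⋂ b ∈ B, ⋂ t ∈ T, U b t,
    hBf.biInter_mem_mnTop fun b hb => hTf.biInter_mem_mnTop fun t ht => hU b (hBA hb) t (hTS ht),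
    Set.mem_biInter fun b hb => Set.mem_biInter fun t ht => hwU b (hBA hb) t (hTS ht),
    fun q hq => hBT ⟨fun b hb => ?_, fun t ht => ?_⟩⟩
  · simp only [Set.mem_iInter] at hq
    exact (hUsub b (hBA hb) t₀ (hTS ht₀) (hq b hb t₀ ht₀)).1
  · simp only [Set.mem_iInter] at hq
    exact (hUsub b₀ (hBA hb₀) t (hTS ht) (hq b₀ hb₀ t ht)).2

lemma setOf_isMNNhd_mem_mnTop (hT : MNTopological M N) (hM : MinSel M) (hN : MinSel N)
    (V : Set P) : {w | IsMNNhd M N V w} ∈ mnTop M N :=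
  mem_mnTop_of_forall_exists_subset fun _ hz =>
    let ⟨U, hU, hzU, hUV⟩ := IsMNNhd.exists_mem_mnTop hT hz
    ⟨U, hU, hzU, fun _ hw => isMNNhd_of_mem_mnTop hM hN hU hw hUV⟩

/-- `P` is 𝓜𝓝-continuous iff the 𝓜𝓝-convergence structure is topological. -/
theorem stmt_17 {P : Type u} [PartialOrder P] (M N : Set (Set P))
    (hM : MinSel M) (hN : MinSel N) : MNCont M N ↔ MNTopological M N := by
  constructor
  · intro hC I r f x _ hconv
    obtain ⟨⟨A, S, hA, hS, hAx, hSx, hlub, hglb⟩, -⟩ := hC x x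
    refine ⟨A, S, hA, hS, hlub, hglb, fun a ha s hs => ?_⟩
    obtain ⟨i₀, hi₀⟩ := hconv _ (hC a s).2 ⟨hAx ha, hSx hs⟩
    exact ⟨i₀, fun i hi => ⟨(hi₀ i hi).1.le hM hN, (hi₀ i hi).2.le hM hN⟩⟩
  · intro hT x y
    refine ⟨?_, inter_mem_mnTop (setOf_isMNNhd_mem_mnTop hT hM hN _)
      (setOf_isMNNhd_mem_mnTop hT hM hN _)⟩
    obtain ⟨A, S, hA, hS, hlub, hglb, hnhds⟩ := exists_mnTop_subset_Icc hT x
    refine ⟨A, S, hA, hS, fun a ha => ?_, fun s hs => ?_, hlub, hglb⟩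
    · obtain ⟨s, hs⟩ := hN.nonempty hS
      obtain ⟨U, hU, hxU, hUsub⟩ := hnhds a ha s hs
      exact isMNNhd_of_mem_mnTop hM hN hU hxU fun _ hp => (hUsub hp).1
    · obtain ⟨a, ha⟩ := hM.nonempty hA
      obtain ⟨U, hU, hxU, hUsub⟩ := hnhds a ha s hs
      exact isMNNhd_of_mem_mnTop hM hN hU hxU fun _ hp => (hUsub hp).2
end
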